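/- arXiv:0809.2320 — 2 statements merged into one kernel-verified Lean document; each statement's English description precedes it below -/
import Mathlib

section
/- Let V be a finite-dimensional complex vector space with a nondegenerate symmetric bilinear form ω and let z be a nilpotent endomorphism of V that is skew-adjoint with respect to ω. Write the Jordan type of z as d with distinct parts d_1 > d_2 > ... > d_k > 0 of multiplicities s_1, ..., s_k, let p ∈ {1, ..., k} satisfy d_p ≥ d_{p+1} + 2 (where d_{k+1} := 0), and set r := s_1 + ... + s_p. Then F₀ := im(z^{d_p - 1}) ∩ ker(z) is the unique subspace F of V such that: F is isotropic, dim F = r, z(F) = 0, and the endomorphism of F^⊥/F induced by z (note z(F^⊥) ⊆ F^⊥) has Jordan type [(d_1 - 2)^{s_1}, ..., (d_p - 2)^{s_p}, (d_{p+1})^{s_{p+1}}, ..., (d_k)^{s_k}] (parts equal to 0 being discarded). This is the statement that the generalized Springer map for the corresponding induction of nilpotent orbits in so(V) has degree one. -/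
/-- An endomorphism `z` has Jordan type the partition `d` if
`dim ker (z^i) = Σ_j min (d_j, i)` for all `i ≥ 0`. -/
def HasJordanType {V : Type*} [AddCommGroup V] [Module ℂ V] (z : Module.End ℂ V)
    {m : ℕ} (d : Nat.Partition m) : Prop :=
  ∀ i : ℕ, Module.finrank ℂ (LinearMap.ker (z ^ i)) = (d.parts.map (fun p => min p i)).sum

/-- The endomorphism of `F^⊥ / F` induced by `z`, given that `z` preserves
`F^⊥` (the orthogonal complement of `F` with respect to `ω`) and induces a map of the
quotient. -/
noncomputable def inducedQuotientEnd {V : Type*} [AddCommGroup V] [Module ℂ V]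
    (ω : V →ₗ[ℂ] V →ₗ[ℂ] ℂ) (z : Module.End ℂ V) (F : Submodule ℂ V)
    (hW : ∀ x ∈ LinearMap.BilinForm.orthogonal ω F,
      z x ∈ LinearMap.BilinForm.orthogonal ω F)
    (h' : Submodule.comap (LinearMap.BilinForm.orthogonal ω F).subtype F ≤
      Submodule.comap (z.restrict hW)
        (Submodule.comap (LinearMap.BilinForm.orthogonal ω F).subtype F)) :
    Module.End ℂ
      (↥(LinearMap.BilinForm.orthogonal ω F) ⧸
        Submodule.comap (LinearMap.BilinForm.orthogonal ω F).subtype F) :=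
  Submodule.mapQ _ _ (z.restrict hW) h'

/-- The parts of the Jordan type of the induced endomorphism: each part `q ≥ a` is
replaced by `q - 2`, the other parts are kept, and zero entries are discarded. -/
def reducedParts {m : ℕ} (d : Nat.Partition m) (a : ℕ) : Multiset ℕ :=
  Multiset.filter (fun x => 0 < x) (d.parts.map (fun q => if a ≤ q then q - 2 else q))

open Module Submodule

/-! ### Multiset helpers -/

lemma msum_filter_pos (s : Multiset ℕ) (g : ℕ → ℕ) (hg : g 0 = 0) :
    ((s.filter (fun x => 0 < x)).map g).sum = (s.map g).sum := by
  induction s using Multiset.induction with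
  | empty => simp
  | cons x s ih =>
    simp only [Multiset.filter_cons, Multiset.map_cons, Multiset.sum_cons]
    split_ifs with h
    · simp only [Multiset.map_add, Multiset.sum_add, Multiset.map_singleton,
        Multiset.sum_singleton, ih]
    · have hx : x = 0 := by omega
      simp only [zero_add, ih, hx, hg]

lemma msum_ite_card (s : Multiset ℕ) (a c : ℕ) :
    (s.map (fun q => if a ≤ q then c else 0)).sum
      = c * Multiset.card (s.filter (fun q => a ≤ q)) := by
  induction s using Multiset.induction with
  | empty => simp
  | cons x s ih =>
    simp only [Multiset.filter_cons, Multiset.map_cons, Multiset.sum_cons]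
    split_ifs with h
    · simp only [Multiset.card_add, Multiset.card_singleton, ih]
      ring
    · simp only [zero_add, ih]

lemma msum_min_succ (s : Multiset ℕ) (j : ℕ) :
    (s.map (fun q => min q (j + 1))).sum
      = (s.map (fun q => min q j)).sum + Multiset.card (s.filter (fun q => j + 1 ≤ q)) := by
  induction s using Multiset.induction with
  | empty => simp
  | cons x s ih =>
    simp only [Multiset.filter_cons, Multiset.map_cons, Multiset.sum_cons]
    split_ifs with h
    · simp only [Multiset.card_add, Multiset.card_singleton, ih]
      omega
    · simp only [zero_add, ih]
      omega

lemma reduced_sum_low {m : ℕ} (d : Nat.Partition m) (a i : ℕ) (hi : i + 2 ≤ a) :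
    ((reducedParts d a).map (fun p => min p i)).sum
      = (d.parts.map (fun p => min p i)).sum := by
  unfold reducedParts
  rw [msum_filter_pos _ _ (by simp), Multiset.map_map]
  apply congrArg Multiset.sum
  apply Multiset.map_congr rfl
  intro q hq
  dsimp only [Function.comp_apply]
  split_ifs with h <;> omega

lemma reduced_sum_high {m : ℕ} (d : Nat.Partition m) (a i : ℕ) (ha2 : 2 ≤ a) (hi : a ≤ i + 1)
    (hgap : ∀ q ∈ d.parts, q < a → q + 2 ≤ a) :
    ((reducedParts d a).map (fun p => min p i)).sum
        + 2 * Multiset.card (d.parts.filter (fun q => a ≤ q))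
      = (d.parts.map (fun p => min p (i + 2))).sum := by
  unfold reducedParts
  rw [msum_filter_pos _ _ (by simp), Multiset.map_map, ← msum_ite_card d.parts a 2,
    ← Multiset.sum_map_add]
  apply congrArg Multiset.sum
  apply Multiset.map_congr rfl
  intro q hq
  dsimp only [Function.comp_apply]
  split_ifs with h
  · omega
  · have := hgap q hq (by omega)
    omega

lemma reduced_sum_total {m : ℕ} (d : Nat.Partition m) (a : ℕ) (ha2 : 2 ≤ a) :
    (reducedParts d a).sum + 2 * Multiset.card (d.parts.filter (fun q => a ≤ q)) = m := by
  unfold reducedParts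
  have h1 := msum_filter_pos (d.parts.map (fun q => if a ≤ q then q - 2 else q)) id rfl
  simp only [Multiset.map_id] at h1
  rw [h1, ← msum_ite_card d.parts a 2, ← Multiset.sum_map_add]
  have h2 : (d.parts.map fun x =>
      (if a ≤ x then x - 2 else x) + (if a ≤ x then 2 else 0)) = d.parts.map id := by
    apply Multiset.map_congr rfl
    intro q hq
    dsimp only [id]
    split_ifs with h <;> omega
  rw [h2]
  simp only [Multiset.map_id]
  exact d.parts_sum

/-! ### Linear algebra helpers -/

section LinAlgHelpers

variable {V W₂ : Type*} [AddCommGroup V] [Module ℂ V] [AddCommGroup W₂] [Module ℂ W₂]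

lemma finrank_comap_subtype [FiniteDimensional ℂ V] (S P : Submodule ℂ V) :
    finrank ℂ (Submodule.comap S.subtype P) = finrank ℂ ↥(S ⊓ P) := by
  have h1 : Submodule.comap S.subtype P = Submodule.comap S.subtype (S ⊓ P) := by
    rw [Submodule.comap_inf, Submodule.comap_subtype_self, top_inf_eq]
  rw [h1]
  exact (Submodule.comapSubtypeEquivOfLe inf_le_left).finrank_eq

lemma finrank_map_add_inf_ker [FiniteDimensional ℂ V] (f : V →ₗ[ℂ] W₂) (S : Submodule ℂ V) :
    finrank ℂ (Submodule.map f S) + finrank ℂ ↥(S ⊓ LinearMap.ker f) = finrank ℂ S := by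
  have h := LinearMap.finrank_range_add_finrank_ker (f ∘ₗ S.subtype)
  rw [LinearMap.range_comp, Submodule.range_subtype, LinearMap.ker_comp,
    finrank_comap_subtype] at h
  exact h

lemma master_identity [FiniteDimensional ℂ V] (f : Module.End ℂ V) (F W : Submodule ℂ V) :
    finrank ℂ ↥(W ⊓ Submodule.comap f F)
      = finrank ℂ ↥(W ⊓ LinearMap.ker f) + finrank ℂ ↥(F ⊓ Submodule.map f W) := by
  have h := finrank_map_add_inf_ker f (W ⊓ Submodule.comap f F)
  have h1 : Submodule.map f (W ⊓ Submodule.comap f F) = F ⊓ Submodule.map f W := by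
    ext y
    simp only [Submodule.mem_map, Submodule.mem_inf, Submodule.mem_comap]
    constructor
    · rintro ⟨x, ⟨hxW, hxF⟩, rfl⟩
      exact ⟨hxF, x, hxW, rfl⟩
    · rintro ⟨hyF, x, hxW, rfl⟩
      exact ⟨x, ⟨hxW, hyF⟩, rfl⟩
  have h2 : (W ⊓ Submodule.comap f F) ⊓ LinearMap.ker f = W ⊓ LinearMap.ker f := by
    ext x
    simp only [Submodule.mem_inf, Submodule.mem_comap, LinearMap.mem_ker]
    constructor
    · rintro ⟨⟨hxW, _⟩, hk⟩; exact ⟨hxW, hk⟩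
    · rintro ⟨hxW, hk⟩; exact ⟨⟨hxW, by rw [hk]; exact F.zero_mem⟩, hk⟩
  rw [h1, h2] at h
  omega

lemma range_pow_le (z : Module.End ℂ V) {i j : ℕ} (hij : i ≤ j) :
    LinearMap.range (z ^ j) ≤ LinearMap.range (z ^ i) := by
  rintro x ⟨u, rfl⟩
  have : z ^ j = (z ^ i) * (z ^ (j - i)) := by rw [← pow_add]; congr 1; omega
  rw [this]
  exact ⟨(z ^ (j - i)) u, rfl⟩

lemma ker_pow_le (z : Module.End ℂ V) {i j : ℕ} (hij : i ≤ j) :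
    LinearMap.ker (z ^ i) ≤ LinearMap.ker (z ^ j) := by
  intro x hx
  rw [LinearMap.mem_ker] at hx ⊢
  have : z ^ j = (z ^ (j - i)) * (z ^ i) := by rw [← pow_add]; congr 1; omega
  rw [this, Module.End.mul_apply, hx, map_zero]

end LinAlgHelpers

/-! ### Bilinear form helpers -/

section Bilin

variable {V : Type*} [AddCommGroup V] [Module ℂ V]
  (ω : V →ₗ[ℂ] V →ₗ[ℂ] ℂ) (z : Module.End ℂ V)

lemma iter_skew (hskew : ∀ v w : V, ω (z v) w = - ω v (z w)) :
    ∀ (i : ℕ) (v w : V), ω ((z ^ i) v) w = (-1 : ℂ) ^ i * ω v ((z ^ i) w) := by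
  intro i
  induction i with
  | zero => intro v w; simp
  | succ j ih =>
    intro v w
    have h1 : (z ^ (j + 1)) v = (z ^ j) (z v) := by rw [pow_succ, Module.End.mul_apply]
    have h2 : (z ^ (j + 1)) w = z ((z ^ j) w) := by rw [pow_succ', Module.End.mul_apply]
    rw [h1, ih (z v) w, h2, hskew v ((z ^ j) w)]
    ring

lemma orthogonal_sup' (A B : Submodule ℂ V) :
    LinearMap.BilinForm.orthogonal ω (A ⊔ B)
      = LinearMap.BilinForm.orthogonal ω A ⊓ LinearMap.BilinForm.orthogonal ω B := by
  ext x
  simp only [LinearMap.BilinForm.mem_orthogonal_iff, Submodule.mem_inf,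
    LinearMap.BilinForm.isOrtho_def]
  constructor
  · intro h
    exact ⟨fun n hn => h n (Submodule.mem_sup_left hn),
      fun n hn => h n (Submodule.mem_sup_right hn)⟩
  · rintro ⟨hA, hB⟩ n hn
    rcases Submodule.mem_sup.mp hn with ⟨a, haA, b, hbB, rfl⟩
    rw [map_add, LinearMap.add_apply, hA a haA, hB b hbB, add_zero]

lemma orthogonal_range_pow
    (hnd : ∀ v : V, (∀ w : V, ω v w = 0) → v = 0)
    (hsymm : ∀ v w : V, ω v w = ω w v)
    (hskew : ∀ v w : V, ω (z v) w = - ω v (z w)) (i : ℕ) :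
    LinearMap.BilinForm.orthogonal ω (LinearMap.range (z ^ i)) = LinearMap.ker (z ^ i) := by
  ext x
  simp only [LinearMap.BilinForm.mem_orthogonal_iff, LinearMap.BilinForm.isOrtho_def,
    LinearMap.mem_ker]
  constructor
  · intro h
    apply hnd
    intro w
    rw [hsymm]
    have h1 := h ((z ^ i) w) ⟨w, rfl⟩
    rw [iter_skew ω z hskew i w x] at h1
    have hne : ((-1 : ℂ) ^ i) ≠ 0 := by
      apply pow_ne_zero; norm_num
    exact (mul_eq_zero.mp h1).resolve_left hne
  · intro h n hn
    rcases hn with ⟨u, rfl⟩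
    rw [iter_skew ω z hskew i u x, h, map_zero, mul_zero]

end Bilin

section KerInduced

variable {V : Type*} [AddCommGroup V] [Module ℂ V] [FiniteDimensional ℂ V]
  (ω : V →ₗ[ℂ] V →ₗ[ℂ] ℂ) (z : Module.End ℂ V)

lemma finrank_ker_inducedQuotientEnd (F : Submodule ℂ V)
    (hFW : F ≤ LinearMap.BilinForm.orthogonal ω F)
    (hW : ∀ x ∈ LinearMap.BilinForm.orthogonal ω F,
      z x ∈ LinearMap.BilinForm.orthogonal ω F)
    (h' : Submodule.comap (LinearMap.BilinForm.orthogonal ω F).subtype F ≤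
      Submodule.comap (z.restrict hW)
        (Submodule.comap (LinearMap.BilinForm.orthogonal ω F).subtype F)) (i : ℕ) :
    finrank ℂ (LinearMap.ker ((inducedQuotientEnd ω z F hW h') ^ i)) + finrank ℂ F
      = finrank ℂ ↥(LinearMap.BilinForm.orthogonal ω F ⊓ Submodule.comap (z ^ i) F) := by
  set W := LinearMap.BilinForm.orthogonal ω F with hWdef
  set p : Submodule ℂ W := Submodule.comap W.subtype F with hp
  have key : ∀ (j : ℕ) (hj : ∀ x ∈ W, (z ^ j) x ∈ W) (x : W),
      ((inducedQuotientEnd ω z F hW h') ^ j) (Submodule.Quotient.mk x)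
        = Submodule.Quotient.mk ((z ^ j).restrict hj x) := by
    intro j
    induction j with
    | zero =>
      intro hj x
      rw [pow_zero]
      refine Eq.symm (congrArg Submodule.Quotient.mk (Subtype.ext ?_))
      rw [LinearMap.restrict_coe_apply, pow_zero, Module.End.one_apply]
    | succ j ih =>
      intro hj x
      rw [pow_succ, Module.End.mul_apply]
      have h1 : (inducedQuotientEnd ω z F hW h') (Submodule.Quotient.mk x)
          = Submodule.Quotient.mk (z.restrict hW x) := by
        rfl
      rw [h1, ih (fun x hx => Module.End.pow_apply_mem_of_forall_mem j hW x hx) (z.restrict hW x)]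
      refine congrArg Submodule.Quotient.mk (Subtype.ext ?_)
      rw [LinearMap.restrict_coe_apply, LinearMap.restrict_coe_apply,
        LinearMap.restrict_coe_apply]
      rw [pow_succ, Module.End.mul_apply]
  have hWi : ∀ x ∈ W, (z ^ i) x ∈ W := fun x hx =>
    Module.End.pow_apply_mem_of_forall_mem i hW x hx
  set G : Module.End ℂ W := (z ^ i).restrict hWi with hG
  have hpG : p ≤ Submodule.comap G p := by
    have h2 := Submodule.le_comap_pow_of_le_comap p h' i
    rwa [Module.End.pow_restrict i hW] at h2
  have hker : LinearMap.ker ((inducedQuotientEnd ω z F hW h') ^ i)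
      = Submodule.map p.mkQ (Submodule.comap G p) := by
    ext c
    obtain ⟨x, rfl⟩ := Submodule.Quotient.mk_surjective p c
    rw [LinearMap.mem_ker, key i hWi x]
    simp only [Submodule.mem_map, Submodule.mem_comap, Submodule.mkQ_apply]
    constructor
    · intro h
      exact ⟨x, (Submodule.Quotient.mk_eq_zero p).mp h, rfl⟩
    · rintro ⟨y, hy, hxy⟩
      have hyx : y - x ∈ p := (Submodule.Quotient.eq p).mp hxy
      have h3 : G (y - x) ∈ p := hpG hyx
      rw [map_sub] at h3
      have h4 : G x ∈ p := by
        have h4' := sub_mem hy h3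
        simpa using h4'
      rw [Submodule.Quotient.mk_eq_zero]
      exact h4
  have h5 := finrank_map_add_inf_ker p.mkQ (Submodule.comap G p)
  rw [Submodule.ker_mkQ, inf_eq_right.mpr hpG] at h5
  have h6 : Submodule.comap G p = Submodule.comap W.subtype (Submodule.comap (z ^ i) F) := by
    ext x
    simp only [Submodule.mem_comap, hG, hp, Submodule.subtype_apply,
      LinearMap.restrict_coe_apply]
  have h7 : finrank ℂ p = finrank ℂ F := by
    rw [hp, finrank_comap_subtype, inf_eq_right.mpr hFW]
  have h8 : finrank ℂ (Submodule.comap G p)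
      = finrank ℂ ↥(W ⊓ Submodule.comap (z ^ i) F) := by
    rw [h6, finrank_comap_subtype]
  rw [hker]
  rw [h7] at h5
  rw [h8] at h5
  exact h5

end KerInduced

/-- Let `(V, ω)` be a finite-dimensional complex vector space with a nondegenerate
symmetric bilinear form and `z` a nilpotent skew-adjoint endomorphism of Jordan type `d`.
Let `a = d_p` be a part of `d` with `d_p ≥ d_{p+1} + 2` (every part `< a` is `≤ a - 2`,
and `a ≥ 2`), and let `r` be the number of parts `≥ a`.  Then
`F₀ := im (z^(a-1)) ∩ ker z` is the unique subspace `F` of `V` such that `F` is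
isotropic, `dim F = r`, `z F = 0`, and the endomorphism of `F^⊥ / F` induced by `z` has
Jordan type obtained from `d` by replacing each part `q ≥ a` by `q - 2` (discarding
zeros): the generalized Springer map for the corresponding induction of nilpotent orbits
in `so(V)` has degree one. -/
theorem orthogonal_induction_subspace_unique {V : Type*} [AddCommGroup V] [Module ℂ V]
    [FiniteDimensional ℂ V]
    (ω : V →ₗ[ℂ] V →ₗ[ℂ] ℂ)
    (hnd : ∀ v : V, (∀ w : V, ω v w = 0) → v = 0)
    (hsymm : ∀ v w : V, ω v w = ω w v)
    (z : Module.End ℂ V) (hznil : IsNilpotent z)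
    (hskew : ∀ v w : V, ω (z v) w = - ω v (z w))
    {m : ℕ} (hdim : Module.finrank ℂ V = m)
    (d : Nat.Partition m) (hJT : HasJordanType z d)
    (a : ℕ) (ha : a ∈ d.parts) (ha2 : 2 ≤ a)
    (hgap : ∀ q ∈ d.parts, q < a → q + 2 ≤ a)
    (r : ℕ) (hr : r = Multiset.card (d.parts.filter (fun q => a ≤ q))) :
    ∀ F : Submodule ℂ V,
      ((∀ v ∈ F, ∀ w ∈ F, ω v w = 0) ∧
        Module.finrank ℂ F = r ∧
        (∀ v ∈ F, z v = 0) ∧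
        ∀ (hW : ∀ x ∈ LinearMap.BilinForm.orthogonal ω F,
            z x ∈ LinearMap.BilinForm.orthogonal ω F)
          (h' : Submodule.comap (LinearMap.BilinForm.orthogonal ω F).subtype F ≤
            Submodule.comap (z.restrict hW)
              (Submodule.comap (LinearMap.BilinForm.orthogonal ω F).subtype F)),
          ∃ d' : Nat.Partition (m - 2 * r),
            d'.parts = reducedParts d a ∧
            HasJordanType (inducedQuotientEnd ω z F hW h') d') ↔
      F = LinearMap.range (z ^ (a - 1)) ⊓ LinearMap.ker z := by
  have href : LinearMap.IsRefl ω := fun x y h => by rw [hsymm]; exact h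
  have hndeg : LinearMap.BilinForm.Nondegenerate ω :=
    ⟨fun v h => hnd v h, fun v h => hnd v (fun w => (hsymm v w).trans (h w))⟩
  -- counting lemmas
  have hcnt1 : Multiset.card (d.parts.filter (fun q => a - 1 ≤ q)) = r := by
    rw [hr]
    apply congrArg
    apply Multiset.filter_congr
    intro q hq
    constructor
    · intro h1
      by_contra h2
      have h3 := hgap q hq (by omega)
      omega
    · intro h1; omega
  have hNa1 : finrank ℂ (LinearMap.ker (z ^ (a - 1)))
      = finrank ℂ (LinearMap.ker (z ^ (a - 2))) + r := by
    have h := msum_min_succ d.parts (a - 2)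
    simp only [show a - 2 + 1 = a - 1 from by omega] at h
    rw [hJT (a - 1), hJT (a - 2), h, hcnt1]
  have hNa : finrank ℂ (LinearMap.ker (z ^ a))
      = finrank ℂ (LinearMap.ker (z ^ (a - 1))) + r := by
    have h := msum_min_succ d.parts (a - 1)
    simp only [show a - 1 + 1 = a from by omega] at h
    rw [hJT a, hJT (a - 1), h, hr]
  -- dimension of range (z^j) ⊓ ker z
  have hGdim : ∀ j : ℕ, finrank ℂ ↥(LinearMap.range (z ^ j) ⊓ LinearMap.ker z)
      + finrank ℂ (LinearMap.ker (z ^ j)) = finrank ℂ (LinearMap.ker (z ^ (j + 1))) := by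
    intro j
    have hset : LinearMap.range (z ^ j) ⊓ LinearMap.ker z
        = Submodule.map (z ^ j) (LinearMap.ker (z ^ (j + 1))) := by
      ext x
      simp only [Submodule.mem_inf, LinearMap.mem_range, LinearMap.mem_ker, Submodule.mem_map]
      constructor
      · rintro ⟨⟨u, rfl⟩, hk⟩
        refine ⟨u, ?_, rfl⟩
        rw [pow_succ', Module.End.mul_apply, hk]
      · rintro ⟨u, hu, rfl⟩
        refine ⟨⟨u, rfl⟩, ?_⟩
        rw [← Module.End.mul_apply, ← pow_succ']
        exact hu
    have h := finrank_map_add_inf_ker (z ^ j) (LinearMap.ker (z ^ (j + 1)))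
    rw [inf_eq_right.mpr (ker_pow_le z (by omega : j ≤ j + 1))] at h
    rw [hset]
    exact h
  have hF0dim : finrank ℂ ↥(LinearMap.range (z ^ (a - 1)) ⊓ LinearMap.ker z) = r := by
    have h := hGdim (a - 1)
    rw [show a - 1 + 1 = a from by omega] at h
    omega
  have hG2dim : finrank ℂ ↥(LinearMap.range (z ^ (a - 2)) ⊓ LinearMap.ker z) = r := by
    have h := hGdim (a - 2)
    rw [show a - 2 + 1 = a - 1 from by omega] at h
    omega
  have hF0G : LinearMap.range (z ^ (a - 1)) ⊓ LinearMap.ker z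
      = LinearMap.range (z ^ (a - 2)) ⊓ LinearMap.ker z := by
    apply Submodule.eq_of_le_of_finrank_le
    · exact inf_le_inf_right _ (range_pow_le z (by omega))
    · rw [hG2dim, hF0dim]
  have horthsup : ∀ (F' : Submodule ℂ V) (i : ℕ),
      LinearMap.BilinForm.orthogonal ω F' ⊓ LinearMap.ker (z ^ i)
        = LinearMap.BilinForm.orthogonal ω (LinearMap.range (z ^ i) ⊔ F') := by
    intro F' i
    have h := orthogonal_sup' ω (LinearMap.range (z ^ i)) F'
    rw [orthogonal_range_pow ω z hnd hsymm hskew i] at h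
    rw [h, inf_comm]
  intro F
  constructor
  · rintro ⟨hiso, hdF, hzF, hcond⟩
    have hFW : F ≤ LinearMap.BilinForm.orthogonal ω F := by
      intro x hx
      rw [LinearMap.BilinForm.mem_orthogonal_iff]
      intro n hn
      exact hiso n hn x hx
    have hWp : ∀ x ∈ LinearMap.BilinForm.orthogonal ω F,
        z x ∈ LinearMap.BilinForm.orthogonal ω F := by
      intro x hx
      rw [LinearMap.BilinForm.mem_orthogonal_iff]
      intro n hn
      have h1 : - ω n (z x) = 0 := by
        rw [← hskew n x, hzF n hn, map_zero, LinearMap.zero_apply]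
      exact neg_eq_zero.mp h1
    have h'p : Submodule.comap (LinearMap.BilinForm.orthogonal ω F).subtype F ≤
        Submodule.comap (z.restrict hWp)
          (Submodule.comap (LinearMap.BilinForm.orthogonal ω F).subtype F) := by
      intro x hx
      simp only [Submodule.mem_comap, Submodule.subtype_apply] at hx ⊢
      rw [LinearMap.restrict_coe_apply, hzF _ hx]
      exact F.zero_mem
    obtain ⟨d', hd'p, hJT'⟩ := hcond hWp h'p
    have hk := finrank_ker_inducedQuotientEnd ω z F hFW hWp h'p (a - 2)
    have hkk : finrank ℂ (LinearMap.ker ((inducedQuotientEnd ω z F hWp h'p) ^ (a - 2)))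
        = finrank ℂ (LinearMap.ker (z ^ (a - 2))) := by
      rw [hJT' (a - 2), hd'p, reduced_sum_low d a (a - 2) (by omega), ← hJT (a - 2)]
    have hmas := master_identity (z ^ (a - 2)) F (LinearMap.BilinForm.orthogonal ω F)
    have hA : finrank ℂ ↥(LinearMap.BilinForm.orthogonal ω F ⊓ LinearMap.ker (z ^ (a - 2)))
        + finrank ℂ ↥(LinearMap.range (z ^ (a - 2)) ⊔ F) = m := by
      rw [horthsup F (a - 2), LinearMap.BilinForm.finrank_orthogonal hndeg, hdim]
      have h9 := Submodule.finrank_le (LinearMap.range (z ^ (a - 2)) ⊔ F)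
      rw [hdim] at h9
      omega
    have hsup := Submodule.finrank_sup_add_finrank_inf_eq (LinearMap.range (z ^ (a - 2))) F
    have hRi := LinearMap.finrank_range_add_finrank_ker (z ^ (a - 2))
    rw [hdim] at hRi
    have hBle : finrank ℂ ↥(F ⊓ Submodule.map (z ^ (a - 2))
        (LinearMap.BilinForm.orthogonal ω F)) ≤ r := by
      rw [← hdF]; exact Submodule.finrank_mono inf_le_left
    have hCle : finrank ℂ ↥(LinearMap.range (z ^ (a - 2)) ⊓ F) ≤ r := by
      rw [← hdF]; exact Submodule.finrank_mono inf_le_right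
    have hC : finrank ℂ ↥(LinearMap.range (z ^ (a - 2)) ⊓ F) = r := by
      omega
    have hFle1 : F ≤ LinearMap.range (z ^ (a - 2)) := by
      have he : LinearMap.range (z ^ (a - 2)) ⊓ F = F :=
        Submodule.eq_of_le_of_finrank_le inf_le_right (by omega)
      exact le_trans (le_of_eq he.symm) inf_le_left
    have hFle2 : F ≤ LinearMap.ker z := fun x hx => LinearMap.mem_ker.mpr (hzF x hx)
    have hFG : F = LinearMap.range (z ^ (a - 2)) ⊓ LinearMap.ker z :=
      Submodule.eq_of_le_of_finrank_le (le_inf hFle1 hFle2) (by rw [hG2dim, hdF])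
    rw [hFG]
    exact hF0G.symm
  · rintro rfl
    have hzF0 : ∀ v ∈ LinearMap.range (z ^ (a - 1)) ⊓ LinearMap.ker z, z v = 0 := by
      intro v hv
      exact LinearMap.mem_ker.mp (Submodule.mem_inf.mp hv).2
    have hiso0 : ∀ v ∈ LinearMap.range (z ^ (a - 1)) ⊓ LinearMap.ker z,
        ∀ w ∈ LinearMap.range (z ^ (a - 1)) ⊓ LinearMap.ker z, ω v w = 0 := by
      intro v hv w hw
      have hw2 : z w = 0 := LinearMap.mem_ker.mp (Submodule.mem_inf.mp hw).2
      obtain ⟨u, hu⟩ := (Submodule.mem_inf.mp hv).1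
      have e : v = z ((z ^ (a - 2)) u) := by
        rw [← hu, show a - 1 = (a - 2) + 1 from by omega, pow_succ', Module.End.mul_apply]
      rw [e, hskew, hw2, map_zero, neg_zero]
    refine ⟨hiso0, hF0dim, hzF0, ?_⟩
    intro hW h'
    have hFW0 : LinearMap.range (z ^ (a - 1)) ⊓ LinearMap.ker z ≤
        LinearMap.BilinForm.orthogonal ω (LinearMap.range (z ^ (a - 1)) ⊓ LinearMap.ker z) := by
      intro x hx
      rw [LinearMap.BilinForm.mem_orthogonal_iff]
      intro n hn
      exact hiso0 n hn x hx
    -- the orthogonal complement of F₀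
    have hW0 : LinearMap.BilinForm.orthogonal ω (LinearMap.range (z ^ (a - 1)) ⊓ LinearMap.ker z)
        = LinearMap.ker (z ^ (a - 1)) ⊔ LinearMap.range z := by
      have h1 : LinearMap.range (z ^ (a - 1)) ⊓ LinearMap.ker z
          = LinearMap.BilinForm.orthogonal ω (LinearMap.ker (z ^ (a - 1)) ⊔ LinearMap.range z) := by
        have h2 : LinearMap.BilinForm.orthogonal ω (LinearMap.ker (z ^ (a - 1)))
            = LinearMap.range (z ^ (a - 1)) := by
          rw [← orthogonal_range_pow ω z hnd hsymm hskew (a - 1),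
            LinearMap.BilinForm.orthogonal_orthogonal hndeg href]
        have h3 := orthogonal_sup' ω (LinearMap.ker (z ^ (a - 1))) (LinearMap.range z)
        rw [h2] at h3
        have h4 : LinearMap.BilinForm.orthogonal ω (LinearMap.range z) = LinearMap.ker z := by
          have := orthogonal_range_pow ω z hnd hsymm hskew 1
          simpa [pow_one] using this
        rw [h4] at h3
        exact h3.symm
      rw [h1, LinearMap.BilinForm.orthogonal_orthogonal hndeg href]
    -- construct the reduced partition
    have hsum : (reducedParts d a).sum = m - 2 * r := by
      have h := reduced_sum_total d a ha2
      rw [← hr] at h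
      omega
    refine ⟨⟨reducedParts d a, fun {i} hi => Multiset.of_mem_filter hi, hsum⟩, rfl, ?_⟩
    intro i
    show finrank ℂ (LinearMap.ker ((inducedQuotientEnd ω z _ hW h') ^ i))
      = ((reducedParts d a).map (fun p => min p i)).sum
    have hk := finrank_ker_inducedQuotientEnd ω z _ hFW0 hW h' i
    rw [hF0dim] at hk
    have hmas := master_identity (z ^ i) (LinearMap.range (z ^ (a - 1)) ⊓ LinearMap.ker z)
      (LinearMap.BilinForm.orthogonal ω (LinearMap.range (z ^ (a - 1)) ⊓ LinearMap.ker z))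
    have hA : finrank ℂ ↥(LinearMap.BilinForm.orthogonal ω
          (LinearMap.range (z ^ (a - 1)) ⊓ LinearMap.ker z) ⊓ LinearMap.ker (z ^ i))
        + finrank ℂ ↥(LinearMap.range (z ^ i) ⊔
            (LinearMap.range (z ^ (a - 1)) ⊓ LinearMap.ker z)) = m := by
      rw [horthsup _ i, LinearMap.BilinForm.finrank_orthogonal hndeg, hdim]
      have h9 := Submodule.finrank_le (LinearMap.range (z ^ i) ⊔
        (LinearMap.range (z ^ (a - 1)) ⊓ LinearMap.ker z))
      rw [hdim] at h9
      omega
    have hsup := Submodule.finrank_sup_add_finrank_inf_eq (LinearMap.range (z ^ i))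
      (LinearMap.range (z ^ (a - 1)) ⊓ LinearMap.ker z)
    rw [hF0dim] at hsup
    have hRi := LinearMap.finrank_range_add_finrank_ker (z ^ i)
    rw [hdim] at hRi
    rcases Nat.lt_or_ge i (a - 1) with hi | hi
    · -- low case : i ≤ a - 2
      have hIF : LinearMap.range (z ^ i) ⊓ (LinearMap.range (z ^ (a - 1)) ⊓ LinearMap.ker z)
          = LinearMap.range (z ^ (a - 1)) ⊓ LinearMap.ker z :=
        inf_eq_right.mpr (le_trans inf_le_left (range_pow_le z (by omega)))
      have hBF : (LinearMap.range (z ^ (a - 1)) ⊓ LinearMap.ker z) ⊓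
          Submodule.map (z ^ i) (LinearMap.BilinForm.orthogonal ω
            (LinearMap.range (z ^ (a - 1)) ⊓ LinearMap.ker z))
          = LinearMap.range (z ^ (a - 1)) ⊓ LinearMap.ker z := by
        apply inf_eq_left.mpr
        intro x hx
        obtain ⟨u, hu⟩ := (Submodule.mem_inf.mp hx).1
        have e1 : z ^ (a - 1) = (z ^ i) * (z ^ (a - 1 - i)) := by
          rw [← pow_add]; congr 1; omega
        refine Submodule.mem_map.mpr ⟨(z ^ (a - 1 - i)) u, ?_, ?_⟩
        · rw [hW0]
          apply Submodule.mem_sup_right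
          have e2 : z ^ (a - 1 - i) = z * (z ^ (a - 2 - i)) := by
            rw [← pow_succ']; congr 1; omega
          exact ⟨(z ^ (a - 2 - i)) u, by rw [e2, Module.End.mul_apply]⟩
        · rw [← Module.End.mul_apply, ← e1, hu]
      rw [hIF] at hsup
      rw [hBF] at hmas
      rw [hF0dim] at hmas
      rw [reduced_sum_low d a i (by omega), ← hJT i]
      omega
    · -- high case : i ≥ a - 1
      have hIF : LinearMap.range (z ^ i) ⊓ (LinearMap.range (z ^ (a - 1)) ⊓ LinearMap.ker z)
          = LinearMap.range (z ^ i) ⊓ LinearMap.ker z := by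
        ext x
        simp only [Submodule.mem_inf]
        constructor
        · rintro ⟨h1, _, h3⟩; exact ⟨h1, h3⟩
        · rintro ⟨h1, h3⟩; exact ⟨h1, range_pow_le z (by omega) h1, h3⟩
      have hmapW0 : Submodule.map (z ^ i) (LinearMap.BilinForm.orthogonal ω
            (LinearMap.range (z ^ (a - 1)) ⊓ LinearMap.ker z))
          = LinearMap.range (z ^ (i + 1)) := by
        rw [hW0, Submodule.map_sup]
        have h1 : Submodule.map (z ^ i) (LinearMap.ker (z ^ (a - 1))) = ⊥ := by
          ext x
          simp only [Submodule.mem_map, Submodule.mem_bot]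
          constructor
          · rintro ⟨u, hu, rfl⟩
            exact LinearMap.mem_ker.mp (ker_pow_le z (by omega : a - 1 ≤ i) hu)
          · rintro rfl
            exact ⟨0, Submodule.zero_mem _, map_zero _⟩
        have h2 : Submodule.map (z ^ i) (LinearMap.range z) = LinearMap.range (z ^ (i + 1)) := by
          rw [← LinearMap.range_comp, ← Module.End.mul_eq_comp, ← pow_succ]
        rw [h1, h2, bot_sup_eq]
      have hBF : (LinearMap.range (z ^ (a - 1)) ⊓ LinearMap.ker z) ⊓
          Submodule.map (z ^ i) (LinearMap.BilinForm.orthogonal ω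
            (LinearMap.range (z ^ (a - 1)) ⊓ LinearMap.ker z))
          = LinearMap.range (z ^ (i + 1)) ⊓ LinearMap.ker z := by
        rw [hmapW0]
        ext x
        simp only [Submodule.mem_inf]
        constructor
        · rintro ⟨⟨_, h2⟩, h3⟩; exact ⟨h3, h2⟩
        · rintro ⟨h3, h2⟩; exact ⟨⟨range_pow_le z (by omega : a - 1 ≤ i + 1) h3, h2⟩, h3⟩
      rw [hIF] at hsup
      rw [hBF] at hmas
      have hg1 := hGdim i
      have hg2 := hGdim (i + 1)
      have hred := reduced_sum_high d a i ha2 (by omega) hgap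
      rw [← hr] at hred
      rw [← hJT (i + 2)] at hred
      have e3 : i + 1 + 1 = i + 2 := by omega
      rw [e3] at hg2
      omega
end

section
/- Let V be a finite-dimensional complex vector space with a nondegenerate bilinear form ω that is either symmetric or alternating, and let z be an endomorphism of V with ω(z v, w) = -ω(v, z w) for all v, w ∈ V. Let e ≥ 2 be an integer with z^e = 0, and let F ⊆ V be a subspace with z(F) = 0 and z^{e-2}(F^⊥) ⊆ F, where F^⊥ := {w ∈ V : ω(f, w) = 0 for all f ∈ F}. Then im(z^{e-1}) ⊆ F. -/
private lemma pow_skew_aux {V : Type*} [AddCommGroup V] [Module ℂ V]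
    (ω : V →ₗ[ℂ] V →ₗ[ℂ] ℂ) (z : Module.End ℂ V)
    (hskew : ∀ v w : V, ω (z v) w = - ω v (z w)) :
    ∀ (n : ℕ) (v w : V), ω ((z ^ n) v) w = (-1 : ℂ) ^ n * ω v ((z ^ n) w) := by
  intro n
  induction n with
  | zero => intro v w; simp
  | succ n ih =>
    intro v w
    have h1 : (z ^ (n + 1)) v = (z ^ n) (z v) := by
      rw [pow_succ]; rfl
    have h2 : (z ^ (n + 1)) w = z ((z ^ n) w) := by
      rw [pow_succ']; rfl
    rw [h1, ih (z v) w, hskew, h2]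
    ring

/-- Let `V` be a finite-dimensional complex vector space with a nondegenerate bilinear
form `ω` that is symmetric or alternating, and let `z` be an endomorphism of `V` with
`ω(z v, w) = -ω(v, z w)` for all `v, w`.  Let `e ≥ 2` with `z^e = 0` and let `F` be a
subspace with `z F = 0` and `z^(e-2)(F^⊥) ⊆ F`, where
`F^⊥ = {w : ω(f, w) = 0 for all f ∈ F}`.  Then `im (z^(e-1)) ⊆ F`. -/
theorem range_pow_le_of_perp_cond {V : Type*} [AddCommGroup V] [Module ℂ V]
    [FiniteDimensional ℂ V]
    (ω : V →ₗ[ℂ] V →ₗ[ℂ] ℂ)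
    (hnd : ∀ v : V, (∀ w : V, ω v w = 0) → v = 0)
    (hrefl : (∀ v w : V, ω v w = ω w v) ∨ (∀ v : V, ω v v = 0))
    (z : Module.End ℂ V)
    (hskew : ∀ v w : V, ω (z v) w = - ω v (z w))
    (e : ℕ) (he : 2 ≤ e) (hze : z ^ e = 0)
    (F : Submodule ℂ V)
    (hzF : ∀ v ∈ F, z v = 0)
    (hperp : ∀ w : V, (∀ f ∈ F, ω f w = 0) → (z ^ (e - 2)) w ∈ F) :
    ∀ v ∈ LinearMap.range (z ^ (e - 1)), v ∈ F := by
  -- set up bilinear form machinery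
  have hRefl : ω.IsRefl := by
    rcases hrefl with h | h
    · intro v w hvw; rw [← h]; exact hvw
    · exact (LinearMap.IsAlt.isRefl h)
  have hNd : LinearMap.BilinForm.Nondegenerate ω := hRefl.nondegenerate_iff_separatingLeft.mpr hnd
  have hFF : LinearMap.BilinForm.orthogonal ω (LinearMap.BilinForm.orthogonal ω F) = F :=
    LinearMap.BilinForm.orthogonal_orthogonal hNd hRefl F
  rintro v ⟨u, rfl⟩
  rw [← hFF]
  intro w hw
  -- hw : w ∈ ω.orthogonal F
  have hwF : ∀ f ∈ F, ω f w = 0 := fun f hf => hw f hf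
  have hmem : (z ^ (e - 2)) w ∈ F := hperp w hwF
  have hzw : (z ^ (e - 1)) w = 0 := by
    have h1 : e - 1 = (e - 2) + 1 := by omega
    rw [h1, pow_succ']
    show z ((z ^ (e - 2)) w) = 0
    exact hzF _ hmem
  have : ω ((z ^ (e - 1)) u) w = 0 := by
    rw [pow_skew_aux ω z hskew, hzw]
    simp
  exact hRefl _ _ this
end
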